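/- For every word-representable graph G, l(G □ K₂) ≤ 2·l(G) + 3·|V(G)| − 2, where l denotes the minimum length of a word-representant. -/

import Mathlib

open SimpleGraph

variable {V : Type*}

/-- Two distinct letters `x` and `y` alternate in a word `w` if the subsequence of `w`
consisting of all occurrences of `x` and `y` is strictly alternating. -/
def Alternates [DecidableEq V] (x y : V) (w : List V) : Prop :=
  (w.filter (fun z => decide (z = x ∨ z = y))).Chain' (· ≠ ·)

/-- A word `w` represents the graph `G` if it contains every vertex at least once and
two distinct vertices are adjacent iff they alternate in `w`. -/
def Represents [DecidableEq V] (G : SimpleGraph V) (w : List V) : Prop :=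
  (∀ v : V, v ∈ w) ∧ ∀ x y : V, x ≠ y → (G.Adj x y ↔ Alternates x y w)

/-- A graph is word-representable if some word represents it. -/
def WordRepresentable [DecidableEq V] (G : SimpleGraph V) : Prop :=
  ∃ w : List V, Represents G w

/-- `l(G)`: the minimum length of a word-representant of `G`. -/
noncomputable def reprLen [DecidableEq V] (G : SimpleGraph V) : ℕ :=
  sInf {n | ∃ w : List V, Represents G w ∧ w.length = n}

/-!
If `w` represents `G`, substituting `(c,1)(c,0)` for every letter `c` of `w` gives a word in
which each level of the prism alternates exactly like `w` and the two copies of a vertex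
alternate; but `(x,0)` and `(y,1)` may still alternate. This is repaired by appending `(c,1)` for
every `c` in `p = w.dedup`, and then `(c,0)(c,1)` for every `c` in `p` but the last; `List.dedup`
keeps last occurrences, so `p` lists the vertices in the order of their last occurrences in `w`.
Restricted to `{x, y}`, `p` therefore starts with the letter that does not end `w`: on each level
the appended letters continue the alternation of `w`, while across the levels they produce two
occurrences of `(y,1)` with no `(x,0)` in between. The added length is `|V| + 2 (|V| - 1)`.
-/
namespace List
variable {α : Type*}

theorem flatMap_filter {β : Type*} (p : α → Bool) (f : α → List β) (l : List α) :
    (l.filter p).flatMap f = l.flatMap fun a => if p a then f a else [] := by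
  induction l with
  | nil => rfl
  | cons a l ih => by_cases h : p a <;> simp [h, ih]

theorem getLast?_dedup [DecidableEq α] (l : List α) : l.dedup.getLast? = l.getLast? := by
  induction l with
  | nil => rfl
  | cons a l ih =>
    by_cases ha : a ∈ l
    · simp [dedup_cons_of_mem ha, ih, getLast?_cons, getLast?_eq_some_getLast (ne_nil_of_mem ha)]
    · rw [dedup_cons_of_notMem ha, getLast?_cons, getLast?_cons, ih]

theorem dedup_filter [DecidableEq α] (p : α → Bool) (l : List α) :
    (l.filter p).dedup = l.dedup.filter p := by
  induction l with
  | nil => rfl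
  | cons a l ih =>
    by_cases hp : p a <;> by_cases ha : a ∈ l <;>
      simp [hp, ha, dedup_cons_of_mem, dedup_cons_of_notMem, ih]

theorem filter_dropLast_eq_or (p : α → Bool) (l : List α) :
    l.dropLast.filter p = l.filter p ∨ l.dropLast.filter p = (l.filter p).dropLast := by
  rcases eq_or_ne l [] with rfl | hl
  · simp
  rw [← dropLast_append_getLast hl]
  by_cases h : p (l.getLast hl) <;> simp [h, filter_append]

theorem dedup_eq_pair [DecidableEq α] {l : List α} {a b : α} (hab : a ≠ b)
    (hmem : ∀ c, c ∈ l ↔ c = a ∨ c = b) (hlast : l.getLast? = some b) : l.dedup = [a, b] := by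
  have hperm : l.dedup.Perm [a, b] := by
    rw [perm_ext_iff_of_nodup (nodup_dedup l) (by simpa using hab)]
    simp [hmem]
  obtain ⟨c, d, hcd⟩ := length_eq_two.mp hperm.length_eq
  obtain rfl : d = b := by simpa [hcd] using (getLast?_dedup l).trans hlast
  rw [hcd] at hperm ⊢
  simpa using (perm_append_right_iff (l₁ := [c]) (l₂ := [a]) [d]).mp hperm

theorem isChain_ne_flatMap_pair {β : Type*} {p q : α} (hpq : p ≠ q) (m n : List β) :
    ((m.flatMap fun _ => [p, q]) ++ p :: n.flatMap fun _ => [q, p]).IsChain (· ≠ ·) := by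
  induction m with
  | nil =>
    induction n with
    | nil => exact isChain_singleton p
    | cons _ n ih => simpa [isChain_cons_cons, hpq, hpq.symm] using ih
  | cons _ m ih =>
    rcases m with _ | ⟨_, m⟩ <;> simp_all [isChain_cons_cons, hpq.symm]

end List

open List Function

section Alternation
variable {α β : Type*} [DecidableEq α] [DecidableEq β]

theorem alternates_iff {x y : α} {w : List α} :
    Alternates x y w ↔ (w.filter fun z => decide (z = x ∨ z = y)).IsChain (· ≠ ·) :=
  Iff.rfl

theorem alternates_comm {x y : α} {w : List α} : Alternates x y w ↔ Alternates y x w := by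
  rw [alternates_iff, alternates_iff, filter_congr fun z _ => decide_eq_decide.mpr or_comm]

theorem alternates_map {f : α → β} (hf : Injective f) (x y : α) (w : List α) :
    Alternates (f x) (f y) (w.map f) ↔ Alternates x y w := by
  rw [alternates_iff, alternates_iff, filter_map, isChain_map]
  simp [comp_def, hf.eq_iff, hf.ne_iff]

theorem alternates_filter {p : α → Bool} {x y : α} (hx : p x) (hy : p y) (w : List α) :
    Alternates x y (w.filter p) ↔ Alternates x y w := by
  rw [alternates_iff, alternates_iff, filter_filter, filter_congr]
  rintro z -
  by_cases hzx : z = x <;> by_cases hzy : z = y <;> simp_all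

theorem alternates_append_iff {x y a b : α} {u v : List α} (hab : a ≠ b)
    (hu : (u.filter fun z => decide (z = x ∨ z = y)).getLast? = some b)
    (hv : Alternates x y v) (hva : (v.filter fun z => decide (z = x ∨ z = y)).head? = some a) :
    Alternates x y (u ++ v) ↔ Alternates x y u := by
  rw [alternates_iff, alternates_iff, filter_append, isChain_append, hu, hva]
  exact ⟨And.left, fun h => ⟨h, hv, by simp [hab.symm]⟩⟩

theorem not_alternates_of_eq_append {x y : α} {u u₁ m u₂ : List α} (hx : x ∉ m) (hy : y ∉ m)
    (hu : u = u₁ ++ y :: (m ++ y :: u₂)) : ¬ Alternates x y u := by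
  have hm : (m.filter fun z => decide (z = x ∨ z = y)) = [] := by
    refine filter_eq_nil_iff.mpr fun z hz h => ?_
    rcases of_decide_eq_true h with rfl | rfl <;> contradiction
  rw [alternates_iff, hu, filter_append, filter_cons_of_pos (by simp), filter_append, hm,
    nil_append, filter_cons_of_pos (by simp), isChain_append]
  simp

end Alternation

section Prism
variable [DecidableEq V]

def prismWord (w : List V) : List (V × Fin 2) :=
  w.flatMap (fun c => [(c, 1), (c, 0)]) ++ w.dedup.map (fun c => (c, 1)) ++
    w.dedup.dropLast.flatMap (fun c => [(c, 0), (c, 1)])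

theorem length_prismWord (w : List V) :
    (prismWord w).length = 2 * w.length + 3 * w.dedup.length - 2 := by
  rcases eq_or_ne w [] with rfl | hw
  · rfl
  have : 0 < w.dedup.length := length_pos_iff.mpr ((dedup_eq_nil w).not.mpr hw)
  simp [prismWord, length_flatMap]
  omega

theorem filter_prismWord_fst (q : V → Bool) (w : List V) :
    (prismWord w).filter (fun z => q z.1) =
      (w.filter q).flatMap (fun c => [(c, 1), (c, 0)]) ++
        (w.dedup.filter q).map (fun c => (c, 1)) ++
        (w.dedup.dropLast.filter q).flatMap (fun c => [(c, 0), (c, 1)]) := by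
  have hpair (c : V) (i j : Fin 2) :
      [(c, i), (c, j)].filter (fun z => q z.1) = if q c then [(c, i), (c, j)] else [] := by
    cases h : q c <;> simp [h]
  simp [prismWord, filter_flatMap, filter_map, flatMap_filter, comp_def, hpair]

theorem filter_prismWord_snd_eq_zero (w : List V) :
    (prismWord w).filter (fun z => z.2 = 0) = (w ++ w.dedup.dropLast).map (fun c => (c, 0)) := by
  simp [prismWord, filter_flatMap, filter_map, ← map_eq_flatMap, comp_def]

theorem filter_prismWord_snd_eq_one (w : List V) :
    (prismWord w).filter (fun z => z.2 = 1) =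
      (w ++ w.dedup ++ w.dedup.dropLast).map (fun c => (c, 1)) := by
  simp [prismWord, filter_flatMap, filter_map, ← map_eq_flatMap, comp_def]

theorem exists_filter_dedup_eq_pair {w : List V} {x y : V} (hxy : x ≠ y) (hx : x ∈ w)
    (hy : y ∈ w) : ∃ a b, a ≠ b ∧ (a = x ∧ b = y ∨ a = y ∧ b = x) ∧
      (w.filter fun c => decide (c = x ∨ c = y)).getLast? = some b ∧
      w.dedup.filter (fun c => decide (c = x ∨ c = y)) = [a, b] ∧
      (w.dedup.dropLast.filter (fun c => decide (c = x ∨ c = y)) = [a, b] ∨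
        w.dedup.dropLast.filter (fun c => decide (c = x ∨ c = y)) = [a]) := by
  set q : V → Bool := fun c => decide (c = x ∨ c = y)
  have hmem (c : V) : c ∈ w.filter q ↔ c = x ∨ c = y := by
    simp only [q, mem_filter, decide_eq_true_eq]
    constructor
    · exact And.right
    · rintro (rfl | rfl) <;> simp [hx, hy]
  have hne : w.filter q ≠ [] := ne_nil_of_mem ((hmem x).mpr (.inl rfl))
  have hget := getLast?_eq_some_getLast hne
  obtain ⟨a, b, hab, hset, hlast⟩ : ∃ a b, a ≠ b ∧ (a = x ∧ b = y ∨ a = y ∧ b = x) ∧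
      (w.filter q).getLast? = some b := by
    rcases (hmem _).mp (getLast_mem hne) with h | h
    · exact ⟨y, x, hxy.symm, .inr ⟨rfl, rfl⟩, h ▸ hget⟩
    · exact ⟨x, y, hxy, .inl ⟨rfl, rfl⟩, h ▸ hget⟩
  have hpair : w.dedup.filter q = [a, b] := by
    rw [← dedup_filter]
    refine dedup_eq_pair hab (fun c => ?_) hlast
    rw [hmem]
    rcases hset with ⟨rfl, rfl⟩ | ⟨rfl, rfl⟩ <;> tauto
  refine ⟨a, b, hab, hset, hlast, hpair, ?_⟩
  rcases filter_dropLast_eq_or q w.dedup with h | h <;> rw [h, hpair] <;> simp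

theorem alternates_prismWord_same_level {w : List V} {x y : V} (hxy : x ≠ y) (hx : x ∈ w)
    (hy : y ∈ w) (i : Fin 2) : Alternates (x, i) (y, i) (prismWord w) ↔ Alternates x y w := by
  obtain ⟨a, b, hab, -, hlast, hpair, hdrop⟩ := exists_filter_dedup_eq_pair hxy hx hy
  rw [← alternates_filter (p := fun z => z.2 = i) (by simp) (by simp) (prismWord w)]
  obtain rfl | rfl : i = 0 ∨ i = 1 := by omega
  · rw [filter_prismWord_snd_eq_zero, alternates_map (Prod.mk_left_injective _),
      alternates_append_iff hab hlast] <;>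
    rcases hdrop with h | h <;> simp only [alternates_iff, h] <;> simp [hab]
  · rw [filter_prismWord_snd_eq_one, append_assoc, alternates_map (Prod.mk_left_injective _),
      alternates_append_iff hab hlast] <;>
    rcases hdrop with h | h <;> simp only [alternates_iff, filter_append, hpair, h] <;>
      simp [hab, hab.symm]

theorem alternates_prismWord_one_zero {w : List V} {x : V} (hx : x ∈ w) :
    Alternates (x, 1) (x, 0) (prismWord w) := by
  rw [← alternates_filter (p := fun z => decide (z.1 = x)) (by simp) (by simp),
    filter_prismWord_fst (fun c => decide (c = x))]
  have hdedup : w.dedup.filter (fun c => decide (c = x)) = [x] := by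
    rw [← dedup_filter, filter_eq, replicate_dedup (count_pos_iff.mpr hx).ne']
  have hconst (l : List V) (f : V → List (V × Fin 2)) :
      (l.filter fun c => decide (c = x)).flatMap f =
        (l.filter fun c => decide (c = x)).flatMap fun _ => f x :=
    flatMap_congr fun c hc => by rw [of_decide_eq_true (mem_filter.mp hc).2]
  rw [hdedup, hconst w, hconst w.dedup.dropLast, map_singleton, append_assoc, singleton_append,
    alternates_iff, filter_eq_self.mpr]
  · exact isChain_ne_flatMap_pair (p := ((x, 1) : V × Fin 2)) (q := (x, 0)) (by simp) _ _
  · simp only [mem_append, mem_flatMap, mem_cons]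
    aesop

theorem not_alternates_prismWord_zero_one {w : List V} {x y : V} (hxy : x ≠ y) (hx : x ∈ w)
    (hy : y ∈ w) : ¬ Alternates (x, 0) (y, 1) (prismWord w) := by
  obtain ⟨a, b, hab, hset, hlast, hpair, hdrop⟩ := exists_filter_dedup_eq_pair hxy hx hy
  rw [← alternates_filter (p := fun z => decide (z.1 = x ∨ z.1 = y)) (by simp) (by simp),
    filter_prismWord_fst (fun c => decide (c = x ∨ c = y)), hpair]
  set t := w.dedup.dropLast.filter fun c => decide (c = x ∨ c = y)
  rcases hset with ⟨rfl, rfl⟩ | ⟨rfl, rfl⟩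
  · obtain ⟨r, hr⟩ := getLast?_eq_some_iff.mp hlast
    refine not_alternates_of_eq_append (u₁ := r.flatMap fun c => [(c, 1), (c, 0)])
      (m := [(b, 0), (a, 1)]) (u₂ := t.flatMap fun c => [(c, 0), (c, 1)]) (by simp [hab])
      (by simp [hab.symm]) ?_
    rw [hr]
    simp
  · set r := w.filter fun c => decide (c = b ∨ c = a)
    rcases hdrop with h | h <;> rw [h]
    · exact not_alternates_of_eq_append (u₁ := r.flatMap fun c => [(c, 1), (c, 0)])
        (m := [(b, 1), (a, 0)]) (u₂ := [(b, 0), (b, 1)]) (by simp [hab.symm]) (by simp [hab])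
        (by simp)
    · exact not_alternates_of_eq_append (u₁ := r.flatMap fun c => [(c, 1), (c, 0)])
        (m := [(b, 1), (a, 0)]) (u₂ := []) (by simp [hab.symm]) (by simp [hab]) (by simp)

theorem alternates_prismWord_same_vertex {w : List V} {x : V} (hx : x ∈ w) {i j : Fin 2}
    (hij : i ≠ j) : Alternates (x, i) (x, j) (prismWord w) := by
  obtain ⟨rfl, rfl⟩ | ⟨rfl, rfl⟩ : i = 0 ∧ j = 1 ∨ i = 1 ∧ j = 0 := by omega
  · exact alternates_comm.mp (alternates_prismWord_one_zero hx)
  · exact alternates_prismWord_one_zero hx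

theorem alternates_prismWord_iff {w : List V} {x y : V} (hxy : x ≠ y) (hx : x ∈ w) (hy : y ∈ w)
    (i j : Fin 2) : Alternates (x, i) (y, j) (prismWord w) ↔ i = j ∧ Alternates x y w := by
  rcases eq_or_ne i j with rfl | hij
  · simpa using alternates_prismWord_same_level hxy hx hy i
  obtain ⟨rfl, rfl⟩ | ⟨rfl, rfl⟩ : i = 0 ∧ j = 1 ∨ i = 1 ∧ j = 0 := by omega
  · simpa using not_alternates_prismWord_zero_one hxy hx hy
  · rw [alternates_comm]
    simpa using not_alternates_prismWord_zero_one hxy.symm hy hx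

theorem Represents.prism {G : SimpleGraph V} {w : List V} (hw : Represents G w) :
    Represents (G □ (⊤ : SimpleGraph (Fin 2))) (prismWord w) := by
  refine ⟨fun ⟨c, i⟩ => ?_, fun ⟨x, i⟩ ⟨y, j⟩ hne => ?_⟩
  · obtain rfl | rfl : i = 0 ∨ i = 1 := by omega
    all_goals simp [prismWord, hw.1 c]
  rw [boxProd_adj, top_adj]
  rcases eq_or_ne x y with rfl | hxy
  · have hij : i ≠ j := fun h => hne (h ▸ rfl)
    simpa [hij] using alternates_prismWord_same_vertex (hw.1 x) hij
  · rw [alternates_prismWord_iff hxy (hw.1 x) (hw.1 y), hw.2 x y hxy]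
    simp [hxy, and_comm]

end Prism

section WordRepresentation
variable [DecidableEq V] {G : SimpleGraph V}

theorem reprLen_le {w : List V} (hw : Represents G w) : reprLen G ≤ w.length :=
  Nat.sInf_le ⟨w, hw, rfl⟩

theorem WordRepresentable.exists_represents_length_eq_reprLen (h : WordRepresentable G) :
    ∃ w, Represents G w ∧ w.length = reprLen G := by
  obtain ⟨w, hw⟩ := h
  exact Nat.sInf_mem (s := {n | ∃ w, Represents G w ∧ w.length = n}) ⟨_, w, hw, rfl⟩

theorem Represents.length_dedup [Fintype V] {w : List V} (hw : Represents G w) :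
    w.dedup.length = Fintype.card V := by
  rw [← card_toFinset, Finset.eq_univ_of_forall fun v => mem_toFinset.mpr (hw.1 v),
    Finset.card_univ]

end WordRepresentation

theorem stmt11 [Fintype V] [DecidableEq V] (G : SimpleGraph V)
    (h : WordRepresentable G) :
    reprLen (G □ (⊤ : SimpleGraph (Fin 2))) ≤ 2 * reprLen G + 3 * Fintype.card V - 2 := by
  obtain ⟨w, hw, hlen⟩ := h.exists_represents_length_eq_reprLen
  calc reprLen (G □ (⊤ : SimpleGraph (Fin 2))) ≤ (prismWord w).length := reprLen_le hw.prism
    _ = 2 * reprLen G + 3 * Fintype.card V - 2 := by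
      rw [length_prismWord, hlen, hw.length_dedup]
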